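/- arXiv:1305.4325 — 2 statements merged into one kernel-verified Lean document; each statement's English description precedes it below -/
import Mathlib

section
/- Let u, v ∈ (ℝ²)^{⊗N} be Kronecker products of standard basis vectors of ℝ², u = ⊗_i u_i, v = ⊗_i v_i, and let a be a real number. Then uᵀ · (⊗_{i=1}^N exp(a·σ^x)) · v = cosh(a)^{d(u,v)'} · sinh(a)^{N − d(u,v)'}, where d(u,v)' = #{i : u_i = v_i}. Equivalently, this equals sinh(a)^N · exp( d(u,v)' · log coth(a) ) when a > 0. -/
open Matrix

/-- The Pauli-x matrix `((0,1),(1,0))`. -/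
noncomputable def pauliX : Matrix (Fin 2) (Fin 2) ℝ := !![0, 1; 1, 0]

/-- The `N`-fold Kronecker product of `2×2` matrices, as a matrix indexed by
`Fin N → Fin 2`. -/
noncomputable def tensorN {N : ℕ} (A : Fin N → Matrix (Fin 2) (Fin 2) ℝ) :
    Matrix (Fin N → Fin 2) (Fin N → Fin 2) ℝ :=
  fun x y => ∏ i, A i (x i) (y i)

/-- The `N`-fold Kronecker product of vectors in `ℝ²`. -/
noncomputable def tensorVecN {N : ℕ} (u : Fin N → Fin 2 → ℝ) : (Fin N → Fin 2) → ℝ :=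
  fun x => ∏ i, u i (x i)

/-! Since `σˣ * σˣ = 1`, the even and odd parts of the exponential series give
`exp (a σˣ) = cosh a • 1 + sinh a • σˣ`: cosh on the diagonal, sinh off it. Sandwiching a
Kronecker product between basis vectors picks out one entry of each factor. -/

open Nat in
theorem exp_smul_of_mul_self_eq_one {𝔸 : Type*} [NormedRing 𝔸] [NormedAlgebra ℝ 𝔸]
    [CompleteSpace 𝔸] {x : 𝔸} (hx : x * x = 1) (a : ℝ) :
    NormedSpace.exp (a • x) = Real.cosh a • 1 + Real.sinh a • x := by
  have hpow : ∀ n, x ^ (2 * n) = 1 := fun n => by rw [pow_mul, sq, hx, one_pow]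
  refine (NormedSpace.exp_series_hasSum_exp' (𝕂 := ℝ) (a • x)).unique
    (HasSum.even_add_odd ?_ ?_)
  · convert (Real.hasSum_cosh a).smul_const (1 : 𝔸) using 2 with n
    rw [smul_pow, hpow, smul_smul, div_eq_inv_mul]
  · convert (Real.hasSum_sinh a).smul_const x using 2 with n
    rw [smul_pow, pow_succ x, hpow, one_mul, smul_smul, div_eq_inv_mul]

theorem pauliX_mul_self : pauliX * pauliX = 1 := by
  simp [pauliX, Matrix.one_fin_two]

theorem exp_smul_pauliX (a : ℝ) :
    NormedSpace.exp (a • pauliX) = Real.cosh a • 1 + Real.sinh a • pauliX :=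
  -- `exp` depends only on the topology, so any Banach algebra norm on matrices will do.
  let _ : NormedRing (Matrix (Fin 2) (Fin 2) ℝ) := Matrix.linftyOpNormedRing
  let _ : NormedAlgebra ℝ (Matrix (Fin 2) (Fin 2) ℝ) := Matrix.linftyOpNormedAlgebra
  exp_smul_of_mul_self_eq_one pauliX_mul_self a

theorem exp_smul_pauliX_apply (a : ℝ) (p q : Fin 2) :
    NormedSpace.exp (a • pauliX) p q = if p = q then Real.cosh a else Real.sinh a := by
  rw [exp_smul_pauliX]
  fin_cases p <;> fin_cases q <;> simp [pauliX]

theorem tensorVecN_single_one {N : ℕ} (s : Fin N → Fin 2) :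
    tensorVecN (fun i => Pi.single (s i) (1 : ℝ)) = Pi.single s 1 := by
  ext x
  simp [tensorVecN, Pi.single_apply, Finset.prod_ite_zero, funext_iff]

theorem single_one_dotProduct_mulVec_single_one {n R : Type*} [Fintype n] [DecidableEq n]
    [NonAssocSemiring R] (M : Matrix n n R) (i j : n) :
    Pi.single i 1 ⬝ᵥ M *ᵥ Pi.single j 1 = M i j := by
  rw [mulVec_single_one, single_dotProduct, one_mul, col_apply]

open Finset in
theorem prod_ite_eq_pow_mul_pow {ι M : Type*} [Fintype ι] [CommMonoid M] (p : ι → Prop)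
    [DecidablePred p] (x y : M) :
    ∏ i, (if p i then x else y) = x ^ #{i | p i} * y ^ (Fintype.card ι - #{i | p i}) := by
  have hcard := card_filter_add_card_filter_not (s := univ) p
  rw [card_univ] at hcard
  rw [prod_ite, prod_const, prod_const, ← hcard, Nat.add_sub_cancel_left]

theorem pow_mul_pow_sub_eq_mul_exp_log {x y : ℝ} (hx : 0 < x) (hy : 0 < y) {d N : ℕ}
    (hdN : d ≤ N) : x ^ d * y ^ (N - d) = y ^ N * Real.exp (d * Real.log (x / y)) := by
  rw [Real.exp_nat_mul, Real.exp_log (div_pos hx hy), div_pow, pow_sub₀ _ hy.ne' hdN]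
  field_simp

/-- Lemma 2 (trace_quantum): for Kronecker products of standard basis vectors
`u = ⊗ᵢ e_{s i}`, `v = ⊗ᵢ e_{t i}`,
`uᵀ (⊗ᵢ exp (a σˣ)) v = cosh(a)^d · sinh(a)^(N−d)` where `d = #{i : s i = t i}`;
for `a > 0` this equals `sinh(a)^N · exp (d · log (coth a))`. -/
theorem tensor_exp_pauliX_basis {N : ℕ} (a : ℝ) (s t : Fin N → Fin 2) :
    (tensorVecN (fun i => Pi.single (s i) (1 : ℝ)) ⬝ᵥ
        (tensorN fun _ => NormedSpace.exp (a • pauliX)).mulVec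
          (tensorVecN fun i => Pi.single (t i) (1 : ℝ)) =
      Real.cosh a ^ (Finset.univ.filter fun i => s i = t i).card *
        Real.sinh a ^ (N - (Finset.univ.filter fun i => s i = t i).card)) ∧
    (0 < a →
      tensorVecN (fun i => Pi.single (s i) (1 : ℝ)) ⬝ᵥ
          (tensorN fun _ => NormedSpace.exp (a • pauliX)).mulVec
            (tensorVecN fun i => Pi.single (t i) (1 : ℝ)) =
        Real.sinh a ^ N *
          Real.exp (((Finset.univ.filter fun i => s i = t i).card : ℝ) *
            Real.log (Real.cosh a / Real.sinh a))) := by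
  have hentries : tensorVecN (fun i => Pi.single (s i) (1 : ℝ)) ⬝ᵥ
        (tensorN fun _ => NormedSpace.exp (a • pauliX)).mulVec
          (tensorVecN fun i => Pi.single (t i) (1 : ℝ)) =
      Real.cosh a ^ (Finset.univ.filter fun i => s i = t i).card *
        Real.sinh a ^ (N - (Finset.univ.filter fun i => s i = t i).card) := by
    rw [tensorVecN_single_one, tensorVecN_single_one, single_one_dotProduct_mulVec_single_one]
    simp only [tensorN, exp_smul_pauliX_apply]
    rw [prod_ite_eq_pow_mul_pow, Fintype.card_fin]
  refine ⟨hentries, fun ha => ?_⟩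
  rw [hentries]
  exact pow_mul_pow_sub_eq_mul_exp_log (Real.cosh_pos a) (Real.sinh_pos_iff.mpr ha)
    (Finset.card_filter_le _ _ |>.trans_eq (Finset.card_fin N))
end

section
/- Let B be an N×N matrix with entries in {0,1} satisfying: (1) B is symmetric, (2) B_{ii} = 1 for all i, and (3) for all i, l, the normalized rows satisfy (B_i/|B_i|)·(B_l/|B_l|) ∈ {0, 1} (inner product of unit-normalized rows is 0 or 1). Then the relation i ~ l defined by B_{il} = 1 is an equivalence relation on {1,...,N}, and hence B determines a partition of {1,...,N}. -/
open Matrix RealInnerProductSpace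

/-
Rows of such a matrix are nonnegative, so related indices `i ~ l` have rows with positive inner
product; the seating condition then forces the normalized rows to coincide (equality in
Cauchy–Schwarz). Both rows have entry `1` in column `l`, so they are equal, and transitivity
follows by reading off column `k`.
-/

section InnerProductSpace

variable {E : Type*} [NormedAddCommGroup E] [InnerProductSpace ℝ E]

theorem real_inner_eq_norm_mul_norm_of_pos_of_cos_mem {x y : E} (hpos : 0 < ⟪x, y⟫)
    (hcos : ⟪x, y⟫ / (‖x‖ * ‖y‖) = 0 ∨ ⟪x, y⟫ / (‖x‖ * ‖y‖) = 1) :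
    ⟪x, y⟫ = ‖x‖ * ‖y‖ := by
  have hnorm : 0 < ‖x‖ * ‖y‖ := hpos.trans_le (real_inner_le_norm x y)
  rcases hcos with hcos | hcos
  · exact absurd hcos (div_pos hpos hnorm).ne'
  · exact (div_eq_one_iff_eq hnorm.ne').1 hcos

theorem eq_of_inner_eq_norm_mul_norm_of_apply_eq {x y : E} (h : ⟪x, y⟫ = ‖x‖ * ‖y‖)
    (f : E →ₗ[ℝ] ℝ) (hf : f x = f y) (hfx : f x ≠ 0) : x = y := by
  have hsmul : ‖y‖ • x = ‖x‖ • y := inner_eq_norm_mul_iff_real.1 h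
  have hx : ‖x‖ ≠ 0 := norm_ne_zero_iff.2 fun hx0 => hfx (by simp [hx0])
  have hnorm : ‖y‖ = ‖x‖ := by
    have happly := congrArg f hsmul
    rw [map_smul, map_smul, smul_eq_mul, smul_eq_mul, hf] at happly
    exact mul_right_cancel₀ (hf ▸ hfx) happly
  rw [hnorm] at hsmul
  exact smul_right_injective E hx hsmul

end InnerProductSpace

section EuclideanSpace

variable {ι : Type*} [Fintype ι]

theorem EuclideanSpace.inner_toLp_toLp_eq_sum (v w : ι → ℝ) :
    ⟪WithLp.toLp 2 v, WithLp.toLp 2 w⟫ = ∑ n, v n * w n := by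
  simp [PiLp.inner_apply, mul_comm]

theorem EuclideanSpace.norm_toLp_eq_sqrt_sum_sq (v : ι → ℝ) :
    ‖WithLp.toLp 2 v‖ = √(∑ n, v n ^ 2) := by
  simp [EuclideanSpace.norm_eq]

end EuclideanSpace

theorem Matrix.row_eq_of_seating {ι : Type*} [Fintype ι] (B : Matrix ι ι ℝ)
    (hnonneg : ∀ i l, 0 ≤ B i l) (hdiag : ∀ i, B i i = 1)
    (hrows : ∀ i l,
      ⟪WithLp.toLp 2 (B i), WithLp.toLp 2 (B l)⟫ /
          (‖WithLp.toLp 2 (B i)‖ * ‖WithLp.toLp 2 (B l)‖) = 0 ∨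
      ⟪WithLp.toLp 2 (B i), WithLp.toLp 2 (B l)⟫ /
          (‖WithLp.toLp 2 (B i)‖ * ‖WithLp.toLp 2 (B l)‖) = 1)
    {i l : ι} (hil : B i l = 1) : B i = B l := by
  have hpos : 0 < ⟪WithLp.toLp 2 (B i), WithLp.toLp 2 (B l)⟫ := by
    rw [EuclideanSpace.inner_toLp_toLp_eq_sum]
    calc (0 : ℝ) < B i l * B l l := by simp [hil, hdiag]
      _ ≤ ∑ n, B i n * B l n :=
        Finset.single_le_sum (fun n _ => mul_nonneg (hnonneg i n) (hnonneg l n))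
          (Finset.mem_univ l)
  have hcol : B i l = B l l := by rw [hil, hdiag]
  have hvec := eq_of_inner_eq_norm_mul_norm_of_apply_eq
    (real_inner_eq_norm_mul_norm_of_pos_of_cos_mem hpos (hrows i l))
    (EuclideanSpace.proj l : EuclideanSpace ℝ ι →L[ℝ] ℝ).toLinearMap (by simpa using hcol)
    (by simp [hil])
  exact congrArg WithLp.ofLp hvec

/-- The paper's "seating conditions": if an `N×N` 0/1 matrix `B` is symmetric, has
unit diagonal, and any two unit-normalized rows have inner product `0` or `1`, then
the relation `i ~ l ↔ B i l = 1` is an equivalence relation on `{1, …, N}`. -/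
theorem seating_conditions_equivalence {N : ℕ} (B : Matrix (Fin N) (Fin N) ℝ)
    (h01 : ∀ i l, B i l = 0 ∨ B i l = 1)
    (hsymm : ∀ i l, B i l = B l i)
    (hdiag : ∀ i, B i i = 1)
    (hrows : ∀ i l,
      ((∑ n, B i n * B l n) /
          (Real.sqrt (∑ n, B i n ^ 2) * Real.sqrt (∑ n, B l n ^ 2))) = 0 ∨
      ((∑ n, B i n * B l n) /
          (Real.sqrt (∑ n, B i n ^ 2) * Real.sqrt (∑ n, B l n ^ 2))) = 1) :
    Equivalence (fun i l : Fin N => B i l = 1) := by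
  have hnonneg : ∀ i l, 0 ≤ B i l := fun i l => by rcases h01 i l with h | h <;> simp [h]
  have hrow : ∀ {i l}, B i l = 1 → B i = B l := fun hil =>
    B.row_eq_of_seating hnonneg hdiag
      (by simpa only [EuclideanSpace.inner_toLp_toLp_eq_sum,
        EuclideanSpace.norm_toLp_eq_sqrt_sum_sq] using hrows) hil
  refine ⟨hdiag, fun {i l} hil => hsymm l i ▸ hil, fun {i j k} hij hjk => ?_⟩
  rw [hrow hij]
  exact hjk
end
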